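/- Fix a constant δ ∈ (0,1) and weights w1 ≥ 2·w2 > 0. Suppose m = m(n) satisfies n^{4/3}/m → 0 as n → ∞. Then the probability that a random instance of the complete and strict 2-weighted popular matching problem with n applicants (|A1| = δn, |A2| = (1-δ)n) and m items has a 2-weighted popular matching tends to 1 as n → ∞ (along those n for which δn is an integer). -/

import Mathlib

/-!
A matching is well-formed if every `F1`-item goes to an applicant of `A1` ranking it first,
every `F2`-item to an applicant of `A2` ranking it first outside `F1`, and everybody gets its
`f`- or `s`-item. For `w1 ≥ 2 w2` a well-formed matching `M` is popular: an applicant gaining in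
a rival matching `M'` receives an `F`-item and displaces its `M`-holder, who loses, unless that
holder is in `A2` and itself gains an `F1`-item; then the final loser is in `A1` and outweighs
both gainers.

A well-formed matching exists unless two applicants with a common `f`-item are both delicate:
the `s`-item of each is also the `s`-item, or the best item outside `F1`, of another applicant.
Exchanging two items outside the relevant exclusion set in a single preference list fixes the
data of all other applicants and moves the `s`-item (resp. `f`-item) to any of the at least
`m - n` items outside; by double counting each coincidence costs a factor `2 / (m - n)` (resp.
`1 / (m - n)`). A union bound gives failure probability at most
`2 n² / (m - n)² + 4 n⁴ / (m - n)³`, which tends to `0` when `n ^ (4/3) = o(m)`.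
-/

open scoped Classical
open Finset

noncomputable section

/-- An instance of the complete and strict 2-weighted popular matching problem:
applicants `A` partitioned into categories `A1` (weight `w1`) and `A2` (weight `w2`),
items `I` with `|A| < |I|`, and for each applicant a strict complete preference list
encoded by an injective ranking function (smaller rank = more preferred). -/
structure TwoWPM (A I : Type) [Fintype A] [DecidableEq A] [Fintype I] [DecidableEq I] where
  A1 : Finset A
  A2 : Finset A
  union_eq : A1 ∪ A2 = Finset.univ
  disj : Disjoint A1 A2
  w1 : ℝ
  w2 : ℝ
  hw12 : w2 < w1
  hw2 : 0 < w2
  rank : A → I → ℕ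
  rank_inj : ∀ x : A, Function.Injective (rank x)
  card_lt : Fintype.card A < Fintype.card I

namespace TwoWPM

variable {A I : Type} [Fintype A] [DecidableEq A] [Fintype I] [DecidableEq I]
variable (P : TwoWPM A I)

/-- applicant `x` prefers item `p` to item `q`. -/
def Prefers (x : A) (p q : I) : Prop := P.rank x p < P.rank x q

/-- the most preferred item of applicant `x` within the set `s` (junk value if `s = ∅`). -/
def bestIn (x : A) (s : Finset I) : I :=
  if hs : s.Nonempty then (Finset.exists_min_image s (P.rank x) hs).choose
  else (Fintype.card_pos_iff.mp (Nat.lt_of_le_of_lt (Nat.zero_le _) P.card_lt)).some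

/-- the first item of an applicant of the first category. -/
def f1 (x : A) : I := P.bestIn x Finset.univ
/-- the set of `f1`-items. -/
def F1 : Finset I := P.A1.image P.f1
/-- the second item of an applicant of the first category. -/
def s1 (x : A) : I := P.bestIn x (Finset.univ \ P.F1)
/-- the set of `s1`-items. -/
def S1 : Finset I := P.A1.image P.s1
/-- the first item of an applicant of the second category. -/
def f2 (y : A) : I := P.bestIn y (Finset.univ \ P.F1)
/-- the set of `f2`-items. -/
def F2 : Finset I := P.A2.image P.f2
/-- the second item of an applicant of the second category. -/
def s2 (y : A) : I := P.bestIn y (Finset.univ \ (P.F1 ∪ P.F2))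
/-- the set of `s2`-items. -/
def S2 : Finset I := P.A2.image P.s2

/-- the weight of an applicant. -/
def weight (x : A) : ℝ := if x ∈ P.A1 then P.w1 else P.w2

/-- `M` is more popular than `M'`: the total weight of applicants preferring `M`
exceeds the total weight of applicants preferring `M'`. -/
def MorePopular (M M' : A → I) : Prop :=
  (∑ x : A, if P.Prefers x (M' x) (M x) then P.weight x else 0) <
    ∑ x : A, if P.Prefers x (M x) (M' x) then P.weight x else 0

/-- `M` is a 2-weighted popular matching. -/
def IsPopular (M : A → I) : Prop :=
  Function.Injective M ∧ ∀ M' : A → I, Function.Injective M' → ¬ P.MorePopular M' M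

/-- `M` is a well-formed matching. -/
def IsWellFormed (M : A → I) : Prop :=
  Function.Injective M ∧
  (∀ x ∈ P.A1, M x = P.f1 x ∨ M x = P.s1 x) ∧
  (∀ y ∈ P.A2, M y = P.f2 y ∨ M y = P.s2 y) ∧
  (∀ p ∈ P.F1, ∃ x ∈ P.A1, P.f1 x = p ∧ M x = p) ∧
  (∀ q ∈ P.F2, ∃ y ∈ P.A2, P.f2 y = q ∧ M y = q)

/-- the instance has a 2-weighted popular matching. -/
def HasPopular : Prop := ∃ M : A → I, P.IsPopular M

/-- the instance has a well-formed matching. -/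
def HasWellFormed : Prop := ∃ M : A → I, P.IsWellFormed M

/-- the `f`-endpoint of the fs-relation-graph edge associated with applicant `a`. -/
def fEnd (a : A) : I := if a ∈ P.A1 then P.f1 a else P.f2 a
/-- the `s`-endpoint of the fs-relation-graph edge associated with applicant `a`. -/
def sEnd (a : A) : I := if a ∈ P.A1 then P.s1 a else P.s2 a

/-- the edge of applicant `a` joins items `p` and `q` in the fs-relation graph. -/
def EdgeJoins (a : A) (p q : I) : Prop :=
  (P.fEnd a = p ∧ P.sEnd a = q) ∨ (P.fEnd a = q ∧ P.sEnd a = p)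

/-- adjacency in the fs-relation graph. -/
def Adj (p q : I) : Prop := ∃ a : A, P.EdgeJoins a p q

/-- a simple path in the fs-relation graph with `k` (distinct) vertices
`v 0, …, v (k-1)` and edges `e 0, …, e (k-2)`, edge `e i` joining `v i` and `v (i+1)`. -/
def IsPath (k : ℕ) (v : ℕ → I) (e : ℕ → A) : Prop :=
  (∀ i j, i < k → j < k → v i = v j → i = j) ∧
  (∀ i, i + 1 < k → P.EdgeJoins (e i) (v i) (v (i + 1)))

/-- a simple cycle in the fs-relation graph with `ℓ ≥ 2` distinct vertices and
`ℓ` distinct edges. -/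
def IsCycle (ℓ : ℕ) (u : ℕ → I) (c : ℕ → A) : Prop :=
  2 ≤ ℓ ∧
  (∀ i j, i < ℓ → j < ℓ → u i = u j → i = j) ∧
  (∀ i j, i < ℓ → j < ℓ → c i = c j → i = j) ∧
  (∀ i, i < ℓ → P.EdgeJoins (c i) (u i) (u ((i + 1) % ℓ)))

/-- a bad subgraph of type `G1`: a simple path on `k ≥ 4` vertices whose first and
last edges belong to `E2`, whose second and second-to-last edges belong to `E1`,
and whose second and second-to-last vertices lie in `S1 ∩ F2`. -/
def HasBadG1 : Prop :=
  ∃ (k : ℕ) (v : ℕ → I) (e : ℕ → A),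
    4 ≤ k ∧ P.IsPath k v e ∧
    e 0 ∈ P.A2 ∧ e 1 ∈ P.A1 ∧ e (k - 2) ∈ P.A2 ∧ e (k - 3) ∈ P.A1 ∧
    v 1 ∈ P.S1 ∧ v 1 ∈ P.F2 ∧ v (k - 2) ∈ P.S1 ∧ v (k - 2) ∈ P.F2

/-- a bad subgraph of type `G2`: a simple cycle together with a simple path on
`k ≥ 3` vertices meeting the cycle exactly in its last vertex, whose first edge is
in `E2`, second edge in `E1`, and second vertex in `S1 ∩ F2`. -/
def HasBadG2 : Prop :=
  ∃ (ℓ : ℕ) (u : ℕ → I) (c : ℕ → A) (k : ℕ) (v : ℕ → I) (e : ℕ → A),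
    P.IsCycle ℓ u c ∧ 3 ≤ k ∧ P.IsPath k v e ∧
    (∃ j, j < ℓ ∧ u j = v (k - 1)) ∧
    (∀ i, i < k - 1 → ∀ j, j < ℓ → v i ≠ u j) ∧
    e 0 ∈ P.A2 ∧ e 1 ∈ P.A1 ∧ v 1 ∈ P.S1 ∧ v 1 ∈ P.F2

/-- a bad subgraph of type `G3`: two distinct cycles lying in the same connected
component of the fs-relation graph. -/
def HasBadG3 : Prop :=
  ∃ (ℓ : ℕ) (u : ℕ → I) (c : ℕ → A) (ℓ' : ℕ) (u' : ℕ → I) (c' : ℕ → A),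
    P.IsCycle ℓ u c ∧ P.IsCycle ℓ' u' c' ∧
    {a : A | ∃ i, i < ℓ ∧ c i = a} ≠ {a : A | ∃ i, i < ℓ' ∧ c' i = a} ∧
    Relation.ReflTransGen P.Adj (u 0) (u' 0)

end TwoWPM
/-- The instance of the complete and strict 2-weighted popular matching problem on
applicants `Fin n` (the first `k` of which form the first category) and items `Fin m`
determined by a profile `σ` of preference lists (rankings) of the applicants. -/
def instOf (n k m : ℕ) (w1 w2 : ℝ) (h : n < m ∧ w2 < w1 ∧ 0 < w2)
    (σ : Fin n → (Fin m ≃ Fin m)) : TwoWPM (Fin n) (Fin m) where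
  A1 := Finset.univ.filter fun x : Fin n => (x : ℕ) < k
  A2 := Finset.univ.filter fun x : Fin n => ¬ (x : ℕ) < k
  union_eq := by
    ext x
    simp only [Finset.mem_union, Finset.mem_filter, Finset.mem_univ, true_and, iff_true]
    tauto
  disj := by
    simp only [Finset.disjoint_left, Finset.mem_filter]
    tauto
  w1 := w1
  w2 := w2
  hw12 := h.2.1
  hw2 := h.2.2
  rank := fun x i => (σ x i : ℕ)
  rank_inj := fun x a b hab => (σ x).injective (Fin.val_injective hab)
  card_lt := by simpa using h.1

/-- the probability that a uniformly random instance of the complete and strict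
2-weighted popular matching problem with `n` applicants (the first `k` forming the
first category), `m` items and weights `w1`, `w2` has a 2-weighted popular matching:
each applicant's preference list is an independent uniformly random linear order,
i.e. a uniformly random ranking bijection. -/
def pmProb (n k m : ℕ) (w1 w2 : ℝ) : ℝ :=
  if h : n < m ∧ w2 < w1 ∧ 0 < w2 then
    ((Finset.univ.filter fun σ : Fin n → (Fin m ≃ Fin m) =>
        (instOf n k m w1 w2 h σ).HasPopular).card : ℝ) /
      (Fintype.card (Fin n → (Fin m ≃ Fin m)) : ℝ)
  else 0

open Filter Topology

lemma exists_fiber_representative {α β : Type*} [Nonempty α] (f : α → β) (p : α → Prop) :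
    ∃ g : β → α, ∀ a, f (g (f a)) = f a ∧ (p a → p (g (f a))) := by
  refine ⟨fun y => if h : ∃ b, f b = y ∧ p b then h.choose else Function.invFun f y,
    fun a => ?_⟩
  by_cases h : ∃ b, f b = f a ∧ p b
  · simp only [dif_pos h]
    exact ⟨h.choose_spec.1, fun _ => h.choose_spec.2⟩
  · simp only [dif_neg h]
    exact ⟨Function.invFun_eq ⟨a, rfl⟩, fun ha => absurd ⟨a, rfl, ha⟩ h⟩

lemma univ_sdiff_nonempty_of_card_lt {I : Type*} [Fintype I] [DecidableEq I] {s : Finset I}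
    (hs : #s < Fintype.card I) : (univ \ s).Nonempty := by
  rw [← Finset.card_pos, Finset.card_univ_sdiff]
  omega

lemma card_biUnion_mul_le_card_mul {ι β : Type*} [DecidableEq β] {S : Finset ι}
    {t : ι → Finset β} {R K : ℕ} (ht : ∀ i ∈ S, #(t i) * R ≤ K) :
    #(S.biUnion t) * R ≤ #S * K :=
  calc #(S.biUnion t) * R ≤ (∑ i ∈ S, #(t i)) * R := Nat.mul_le_mul_right _ Finset.card_biUnion_le
    _ = ∑ i ∈ S, #(t i) * R := Finset.sum_mul _ _ _
    _ ≤ #S * K := by simpa using Finset.sum_le_card_nsmul S _ K ht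

section Switching

variable {ι α : Type*} [DecidableEq ι] [DecidableEq α]

def swapAt (σ : ι → α ≃ α) (z : ι) (u v : α) : ι → α ≃ α :=
  Function.update σ z ((Equiv.swap u v).trans (σ z))

lemma swapAt_swapAt (σ : ι → α ≃ α) (z : ι) (u v : α) :
    swapAt (swapAt σ z u v) z u v = σ := by
  have h : (Equiv.swap u v).trans ((Equiv.swap u v).trans (σ z)) = σ z := by
    ext p
    simp [Equiv.swap_apply_self]
  rw [swapAt, swapAt, Function.update_idem, Function.update_self, h, Function.update_eq_self]

/-- Double counting for the switching `σ ↦ swapAt σ z (φ σ) v`: from a profile of `B` it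
reaches at least `r` profiles of `G`, and a profile of `G` is reached from at most `c`
profiles of `B`, each one recovered from its value `φ σ ∈ T σ` by switching back. -/
theorem card_mul_le_card_mul_of_swapAt [Fintype ι] [Fintype α] (z : ι) {B G : Finset (ι → α ≃ α)}
    (t T : (ι → α ≃ α) → Finset α) (φ : (ι → α ≃ α) → α) {r c : ℕ}
    (hr : ∀ σ ∈ B, r ≤ #(univ \ t σ)) (hc : ∀ σ, #(T σ) ≤ c) (hB : ∀ σ ∈ B, φ σ ∈ T σ)
    (hswap : ∀ σ ∈ B, ∀ v ∉ t σ, swapAt σ z (φ σ) v ∈ G ∧ t (swapAt σ z (φ σ) v) = t σ ∧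
      T (swapAt σ z (φ σ) v) = T σ ∧ φ (swapAt σ z (φ σ) v) = v) :
    #B * r ≤ #G * c := by
  refine Finset.card_mul_le_card_mul (fun σ σ' => ∃ v ∉ t σ, σ' = swapAt σ z (φ σ) v)
    (fun σ hσ => (hr σ hσ).trans ?_) (fun σ' _ => ?_)
  · rw [← Finset.card_image_of_injOn (f := fun v => swapAt σ z (φ σ) v) fun v hv w hw h => by
      simpa [(hswap σ hσ v (by simpa using hv)).2.2.2,
        (hswap σ hσ w (by simpa using hw)).2.2.2] using congrArg φ h]
    refine Finset.card_le_card fun σ' hσ' => ?_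
    obtain ⟨v, hv, rfl⟩ := Finset.mem_image.mp hσ'
    have hv' : v ∉ t σ := by simpa using hv
    exact (Finset.mem_bipartiteAbove _).mpr ⟨(hswap σ hσ v hv').1, v, hv', rfl⟩
  · refine (Finset.card_le_card_of_injOn φ (t := T σ') (fun σ hσ => ?_) fun σ hσ ρ hρ h => ?_).trans
      (hc σ')
    · obtain ⟨hσB, v, hv, rfl⟩ := (Finset.mem_bipartiteBelow _).mp hσ
      exact (hswap σ hσB v hv).2.2.1 ▸ hB σ hσB
    · obtain ⟨hσB, v, hv, rfl⟩ := (Finset.mem_bipartiteBelow _).mp hσ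
      obtain ⟨hρB, w, hw, hρ'⟩ := (Finset.mem_bipartiteBelow _).mp hρ
      have hvw : v = w := by
        rw [← (hswap σ hσB v hv).2.2.2, ← (hswap ρ hρB w hw).2.2.2, hρ']
      rw [← swapAt_swapAt σ z (φ σ) v, ← swapAt_swapAt ρ z (φ ρ) w, ← hρ', ← h, hvw]

end Switching

namespace TwoWPM

variable {A I : Type} [Fintype A] [DecidableEq A] [Fintype I] [DecidableEq I]
variable {P : TwoWPM A I}

lemma bestIn_mem {x : A} {s : Finset I} (hs : s.Nonempty) : P.bestIn x s ∈ s := by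
  rw [bestIn, dif_pos hs]
  exact (s.exists_min_image (P.rank x) hs).choose_spec.1

lemma rank_bestIn_le {x : A} {s : Finset I} {p : I} (hp : p ∈ s) :
    P.rank x (P.bestIn x s) ≤ P.rank x p := by
  rw [bestIn, dif_pos ⟨p, hp⟩]
  exact (s.exists_min_image (P.rank x) ⟨p, hp⟩).choose_spec.2 p hp

lemma bestIn_eq_of_forall_le {x : A} {s : Finset I} {q : I} (hq : q ∈ s)
    (hmin : ∀ p ∈ s, P.rank x q ≤ P.rank x p) : P.bestIn x s = q :=
  P.rank_inj x (le_antisymm (rank_bestIn_le hq) (hmin _ (bestIn_mem ⟨q, hq⟩)))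

lemma not_prefers_of_mem_of_eq_bestIn {x : A} {s : Finset I} {p q : I} (hp : p ∈ s)
    (hq : q = P.bestIn x s) : ¬ P.Prefers x p q :=
  hq ▸ (rank_bestIn_le hp).not_gt

lemma bestIn_congr {P' : TwoWPM A I} {x : A} (h : P'.rank x = P.rank x) (s : Finset I) :
    P'.bestIn x s = P.bestIn x s := by
  by_cases hs : s.Nonempty
  · exact bestIn_eq_of_forall_le (bestIn_mem hs) fun p hp => h ▸ rank_bestIn_le hp
  · simp only [bestIn, dif_neg hs]

lemma mem_A2_iff {a : A} : a ∈ P.A2 ↔ a ∉ P.A1 := by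
  have h := P.union_eq ▸ Finset.mem_univ a
  have := Finset.disjoint_left.mp P.disj
  rw [Finset.mem_union] at h
  tauto

lemma card_A1_add_card_A2 : #P.A1 + #P.A2 = Fintype.card A := by
  rw [← Finset.card_union_of_disjoint P.disj, P.union_eq, Finset.card_univ]

lemma card_F1_le : #P.F1 ≤ Fintype.card A :=
  Finset.card_image_le.trans (P.card_A1_add_card_A2 ▸ Nat.le_add_right _ _)

lemma card_F1_union_F2_le : #(P.F1 ∪ P.F2) ≤ Fintype.card A :=
  (Finset.card_union_le _ _).trans
    (P.card_A1_add_card_A2 ▸ Nat.add_le_add Finset.card_image_le Finset.card_image_le)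

lemma f2_eq_s1 : P.f2 = P.s1 := rfl

lemma f1_mem_F1 {a : A} (ha : a ∈ P.A1) : P.f1 a ∈ P.F1 := Finset.mem_image_of_mem _ ha

lemma f2_mem_F2 {a : A} (ha : a ∈ P.A2) : P.f2 a ∈ P.F2 := Finset.mem_image_of_mem _ ha

lemma bestIn_notMem_of_card_le {x : A} {s : Finset I} (hs : #s ≤ Fintype.card A) :
    P.bestIn x (univ \ s) ∉ s :=
  (Finset.mem_sdiff.mp (bestIn_mem (univ_sdiff_nonempty_of_card_lt (hs.trans_lt P.card_lt)))).2

lemma s1_notMem_F1 (a : A) : P.s1 a ∉ P.F1 := bestIn_notMem_of_card_le P.card_F1_le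

lemma s2_notMem_F1_union_F2 (a : A) : P.s2 a ∉ P.F1 ∪ P.F2 :=
  bestIn_notMem_of_card_le P.card_F1_union_F2_le

lemma disjoint_F1_F2 : Disjoint P.F1 P.F2 := by
  simp only [Finset.disjoint_right, F2, Finset.mem_image]
  rintro _ ⟨y, -, rfl⟩
  exact P.s1_notMem_F1 y

lemma fEnd_of_mem_A1 {a : A} (h : a ∈ P.A1) : P.fEnd a = P.f1 a := if_pos h
lemma fEnd_of_notMem_A1 {a : A} (h : a ∉ P.A1) : P.fEnd a = P.f2 a := if_neg h
lemma sEnd_of_mem_A1 {a : A} (h : a ∈ P.A1) : P.sEnd a = P.s1 a := if_pos h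
lemma sEnd_of_notMem_A1 {a : A} (h : a ∉ P.A1) : P.sEnd a = P.s2 a := if_neg h

lemma fEnd_mem_F1_iff {a : A} : P.fEnd a ∈ P.F1 ↔ a ∈ P.A1 := by
  by_cases h : a ∈ P.A1
  · simp only [fEnd_of_mem_A1 h, f1_mem_F1 h, h]
  · simp only [fEnd_of_notMem_A1 h, f2_eq_s1, s1_notMem_F1, h]

lemma sEnd_notMem_F1 (a : A) : P.sEnd a ∉ P.F1 := by
  by_cases h : a ∈ P.A1
  · exact sEnd_of_mem_A1 h ▸ P.s1_notMem_F1 a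
  · exact sEnd_of_notMem_A1 h ▸ fun h' => P.s2_notMem_F1_union_F2 a (Finset.mem_union_left _ h')

lemma mem_F1_of_prefers_s1 {x : A} {p : I} (h : P.Prefers x p (P.s1 x)) : p ∈ P.F1 := by
  by_contra hp
  exact not_prefers_of_mem_of_eq_bestIn (by simpa using hp) rfl h

lemma mem_F1_union_F2_of_prefers_s2 {x : A} {p : I} (h : P.Prefers x p (P.s2 x)) :
    p ∈ P.F1 ∪ P.F2 := by
  by_contra hp
  exact not_prefers_of_mem_of_eq_bestIn (by simpa using hp) rfl h

lemma weight_of_mem_A1 {a : A} (h : a ∈ P.A1) : P.weight a = P.w1 := if_pos h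
lemma weight_of_notMem_A1 {a : A} (h : a ∉ P.A1) : P.weight a = P.w2 := if_neg h

variable (P) in
def preferring (M M' : A → I) : Finset A := univ.filter fun a => P.Prefers a (M a) (M' a)

lemma morePopular_iff {M M' : A → I} :
    P.MorePopular M M' ↔
      ∑ a ∈ P.preferring M' M, P.weight a < ∑ a ∈ P.preferring M M', P.weight a := by
  simp only [MorePopular, preferring, Finset.sum_filter]

lemma prefers_of_not_prefers {x : A} {p q : I} (h : ¬ P.Prefers x q p) (hne : p ≠ q) :
    P.Prefers x p q :=
  lt_of_le_of_ne (not_lt.mp h) fun h' => hne (P.rank_inj x h')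

lemma sum_weight_of_subset_A1 {s : Finset A} (hs : ∀ a ∈ s, a ∈ P.A1) :
    ∑ a ∈ s, P.weight a = P.w1 * #s := by
  rw [Finset.sum_congr rfl fun a ha => weight_of_mem_A1 (hs a ha), Finset.sum_const,
    nsmul_eq_mul, mul_comm]

lemma sum_weight_of_disjoint_A1 {s : Finset A} (hs : ∀ a ∈ s, a ∉ P.A1) :
    ∑ a ∈ s, P.weight a = P.w2 * #s := by
  rw [Finset.sum_congr rfl fun a ha => weight_of_notMem_A1 (hs a ha), Finset.sum_const,
    nsmul_eq_mul, mul_comm]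

lemma mul_card_add_mul_card_le_sum_weight {S T L : Finset A} (hS : ∀ a ∈ S, a ∈ P.A1 ∧ a ∈ L)
    (hT : ∀ a ∈ T, a ∉ P.A1 ∧ a ∈ L) : P.w1 * #S + P.w2 * #T ≤ ∑ a ∈ L, P.weight a := by
  have hST : Disjoint S T := Finset.disjoint_left.mpr fun a haS haT => (hT a haT).1 (hS a haS).1
  rw [← sum_weight_of_subset_A1 fun a ha => (hS a ha).1,
    ← sum_weight_of_disjoint_A1 fun a ha => (hT a ha).1, ← Finset.sum_union hST]
  refine Finset.sum_le_sum_of_subset_of_nonneg (Finset.union_subset (fun a ha => (hS a ha).2)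
    fun a ha => (hT a ha).2) fun a _ _ => ?_
  unfold weight
  split_ifs <;> linarith [P.hw2, P.hw12]

section WellFormed

variable {M M' : A → I}

lemma IsWellFormed.mem_F1_of_prefers (hM : P.IsWellFormed M) {a : A} {p : I}
    (ha : a ∈ P.A1) (h : P.Prefers a p (M a)) : p ∈ P.F1 := by
  rcases hM.2.1 a ha with hMa | hMa <;> rw [hMa] at h
  · exact absurd h (not_prefers_of_mem_of_eq_bestIn (Finset.mem_univ p) rfl)
  · exact mem_F1_of_prefers_s1 h

lemma IsWellFormed.mem_F1_union_F2_of_prefers (hM : P.IsWellFormed M) {a : A} {p : I}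
    (h : P.Prefers a p (M a)) : p ∈ P.F1 ∪ P.F2 := by
  by_cases ha : a ∈ P.A1
  · exact Finset.mem_union_left _ (hM.mem_F1_of_prefers ha h)
  rcases hM.2.2.1 a (P.mem_A2_iff.mpr ha) with hMa | hMa <;> rw [hMa] at h
  · exact Finset.mem_union_left _ (mem_F1_of_prefers_s1 h)
  · exact mem_F1_union_F2_of_prefers_s2 h

lemma IsWellFormed.exists_eq_of_mem_F1_union_F2 (hM : P.IsWellFormed M) {p : I}
    (hp : p ∈ P.F1 ∪ P.F2) : ∃ b, M b = p := by
  rcases Finset.mem_union.mp hp with hp | hp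
  · obtain ⟨x, -, -, hx⟩ := hM.2.2.2.1 p hp
    exact ⟨x, hx⟩
  · obtain ⟨x, -, -, hx⟩ := hM.2.2.2.2 p hp
    exact ⟨x, hx⟩

lemma ne_of_eq_of_prefers {a b : A} (hM' : M'.Injective) (ha : P.Prefers a (M' a) (M a))
    (hb : M b = M' a) : M b ≠ M' b := by
  intro h
  obtain rfl : b = a := hM' (h.symm.trans hb)
  exact lt_irrefl _ (hb ▸ ha)

lemma IsWellFormed.mem_preferring_of_mem_F1 (hM : P.IsWellFormed M) (hM' : M'.Injective)
    {a b : A} (ha : a ∈ P.preferring M' M) (hF1 : M' a ∈ P.F1) (hb : M b = M' a) :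
    b ∈ P.A1 ∧ b ∈ P.preferring M M' := by
  obtain ⟨x, hx, hfx, hMx⟩ := hM.2.2.2.1 _ hF1
  obtain rfl : x = b := hM.1 (hMx.trans hb.symm)
  have hne := ne_of_eq_of_prefers hM' (Finset.mem_filter.mp ha).2 hb
  refine ⟨hx, Finset.mem_filter.mpr ⟨Finset.mem_univ _, prefers_of_not_prefers ?_ hne⟩⟩
  exact not_prefers_of_mem_of_eq_bestIn (Finset.mem_univ _) (hMx.trans hfx.symm)

lemma IsWellFormed.mem_preferring_of_mem_F2 (hM : P.IsWellFormed M) (hM' : M'.Injective)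
    {a b : A} (ha : a ∈ P.preferring M' M) (hF2 : M' a ∈ P.F2) (hb : M b = M' a) :
    b ∉ P.A1 ∧ (b ∈ P.preferring M M' ∨ b ∈ P.preferring M' M ∧ M' b ∈ P.F1) := by
  obtain ⟨x, hx, hfx, hMx⟩ := hM.2.2.2.2 _ hF2
  obtain rfl : x = b := hM.1 (hMx.trans hb.symm)
  have hne := ne_of_eq_of_prefers hM' (Finset.mem_filter.mp ha).2 hb
  refine ⟨P.mem_A2_iff.mp hx, ?_⟩
  by_cases hp : P.Prefers x (M' x) (M x)
  · refine Or.inr ⟨Finset.mem_filter.mpr ⟨Finset.mem_univ _, hp⟩, ?_⟩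
    rw [hMx, ← hfx] at hp
    exact mem_F1_of_prefers_s1 hp
  · exact Or.inl (Finset.mem_filter.mpr ⟨Finset.mem_univ _, prefers_of_not_prefers hp hne⟩)

/-- In the application `G1` and `G2` are the gainers receiving items of `F1` and `F2`, `L` the
losers, and `v a` the applicant from whom `a` takes its item. -/
lemma sum_weight_add_sum_weight_le (hw : 2 * P.w2 ≤ P.w1) {G1 G2 L : Finset A} (v : A → A)
    (hv1 : Set.InjOn v G1) (hv2 : Set.InjOn v G2) (hG2 : ∀ a ∈ G2, a ∉ P.A1)
    (hvG1 : ∀ a ∈ G1, v a ∈ P.A1 ∧ v a ∈ L)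
    (hvG2 : ∀ a ∈ G2, v a ∉ P.A1 ∧ (v a ∈ L ∨ v a ∈ G1)) :
    ∑ a ∈ G1, P.weight a + ∑ a ∈ G2, P.weight a ≤ ∑ a ∈ L, P.weight a := by
  set H := G1.filter (· ∉ P.A1)
  set V2 := (G2.image v).filter (· ∈ L)
  have hcard2 : #G2 ≤ #V2 + #H := by
    rw [← Finset.card_image_of_injOn hv2]
    refine (Finset.card_le_card fun b hb => ?_).trans (Finset.card_union_le _ _)
    obtain ⟨a, ha, rfl⟩ := Finset.mem_image.mp hb
    by_cases hL : v a ∈ L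
    · exact Finset.mem_union_left _ (Finset.mem_filter.mpr ⟨hb, hL⟩)
    · exact Finset.mem_union_right _
        (Finset.mem_filter.mpr ⟨((hvG2 a ha).2.resolve_left hL), (hvG2 a ha).1⟩)
  have hsum1 : ∑ a ∈ G1, P.weight a = P.w1 * #(G1.filter (· ∈ P.A1)) + P.w2 * #H := by
    rw [← Finset.sum_filter_add_sum_filter_not G1 (· ∈ P.A1),
      sum_weight_of_subset_A1 fun a ha => (Finset.mem_filter.mp ha).2,
      sum_weight_of_disjoint_A1 fun a ha => (Finset.mem_filter.mp ha).2]
  have hcard1 : #(G1.filter (· ∈ P.A1)) + #H = #G1 := Finset.card_filter_add_card_filter_not _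
  have hL : P.w1 * #(G1.image v) + P.w2 * #V2 ≤ ∑ a ∈ L, P.weight a :=
    mul_card_add_mul_card_le_sum_weight
      (fun b hb => by obtain ⟨a, ha, rfl⟩ := Finset.mem_image.mp hb; exact hvG1 a ha)
      fun b hb => by
        obtain ⟨a, ha, rfl⟩ := Finset.mem_image.mp (Finset.mem_filter.mp hb).1
        exact ⟨(hvG2 a ha).1, (Finset.mem_filter.mp hb).2⟩
  rw [Finset.card_image_of_injOn hv1] at hL
  have hcard2' : (#G2 : ℝ) ≤ #V2 + #H := by exact_mod_cast hcard2
  have hcard1' : (#(G1.filter (· ∈ P.A1)) : ℝ) + #H = #G1 := by exact_mod_cast hcard1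
  rw [hsum1, sum_weight_of_disjoint_A1 hG2]
  nlinarith [P.hw2, (Nat.cast_nonneg #H : (0 : ℝ) ≤ #H)]

theorem IsWellFormed.isPopular (hw : 2 * P.w2 ≤ P.w1) (hM : P.IsWellFormed M) :
    P.IsPopular M := by
  refine ⟨hM.1, fun M' hM' hmore => (morePopular_iff.mp hmore).not_ge ?_⟩
  obtain hA | hA := isEmpty_or_nonempty A
  · simp [preferring, Finset.univ_eq_empty]
  set G := P.preferring M' M
  have hgain : ∀ a ∈ G, M' a ∈ P.F1 ∪ P.F2 := fun a ha =>
    hM.mem_F1_union_F2_of_prefers (Finset.mem_filter.mp ha).2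
  set v : A → A := fun a => Function.invFun M (M' a)
  have hv : ∀ a ∈ G, M (v a) = M' a := fun a ha =>
    Function.invFun_eq (hM.exists_eq_of_mem_F1_union_F2 (hgain a ha))
  have hvinj : Set.InjOn v G := fun a ha b hb h => hM' ((hv a ha).symm.trans (h ▸ hv b hb))
  have hsplit : G = G.filter (M' · ∈ P.F1) ∪ G.filter (M' · ∈ P.F2) := by
    rw [← Finset.filter_or]
    exact (Finset.filter_true_of_mem fun a ha => Finset.mem_union.mp (hgain a ha)).symm
  have hdisj : Disjoint (G.filter (M' · ∈ P.F1)) (G.filter (M' · ∈ P.F2)) :=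
    Finset.disjoint_left.mpr fun _ h1 h2 => Finset.disjoint_left.mp P.disjoint_F1_F2
      (Finset.mem_filter.mp h1).2 (Finset.mem_filter.mp h2).2
  rw [hsplit, Finset.sum_union hdisj]
  refine sum_weight_add_sum_weight_le hw v (hvinj.mono (Finset.filter_subset _ _))
    (hvinj.mono (Finset.filter_subset _ _)) (fun a ha h1 => ?_) (fun a ha => ?_) (fun a ha => ?_)
  · obtain ⟨ha, hF2⟩ := Finset.mem_filter.mp ha
    exact Finset.disjoint_left.mp P.disjoint_F1_F2
      (hM.mem_F1_of_prefers h1 (Finset.mem_filter.mp ha).2) hF2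
  · obtain ⟨ha, hF1⟩ := Finset.mem_filter.mp ha
    exact hM.mem_preferring_of_mem_F1 hM' ha hF1 (hv a ha)
  · obtain ⟨ha, hF2⟩ := Finset.mem_filter.mp ha
    obtain ⟨h2, h | ⟨hG, hF1⟩⟩ := hM.mem_preferring_of_mem_F2 hM' ha hF2 (hv a ha)
    · exact ⟨h2, Or.inl h⟩
    · exact ⟨h2, Or.inr (Finset.mem_filter.mpr ⟨hG, hF1⟩)⟩

end WellFormed

variable (P) in
def SCollides (a b : A) : Prop := P.sEnd a ∈ ({P.sEnd b, P.s1 b} : Finset I)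

variable (P) in
def Delicate (a : A) : Prop := ∃ b ≠ a, P.SCollides a b

variable (P) in
def Good : Prop := ∀ a a', a ≠ a' → P.fEnd a = P.fEnd a' → ¬ (P.Delicate a ∧ P.Delicate a')

variable (P) in
def repMatching (g : I → A) (a : A) : I := if g (P.fEnd a) = a then P.fEnd a else P.sEnd a

lemma repMatching_of_eq {g : I → A} {a : A} (h : g (P.fEnd a) = a) :
    P.repMatching g a = P.fEnd a := if_pos h

lemma repMatching_of_ne {g : I → A} {a : A} (h : g (P.fEnd a) ≠ a) :
    P.repMatching g a = P.sEnd a := if_neg h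

lemma repMatching_injective {g : I → A} (hrep : ∀ a, P.Delicate a → g (P.fEnd a) = a) :
    (P.repMatching g).Injective := by
  have hfs : ∀ a a', a ≠ a' → g (P.fEnd a') ≠ a' → P.fEnd a ≠ P.sEnd a' := by
    intro a a' hne h' he
    by_cases ha : a ∈ P.A1
    · exact P.sEnd_notMem_F1 a' (he ▸ P.fEnd_mem_F1_iff.mpr ha)
    · refine h' (hrep a' ⟨a, hne, ?_⟩)
      rw [SCollides, ← he, fEnd_of_notMem_A1 ha, f2_eq_s1]
      simp
  intro a a' he
  by_contra hne
  by_cases h : g (P.fEnd a) = a <;> by_cases h' : g (P.fEnd a') = a' <;>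
    simp only [repMatching_of_eq, repMatching_of_ne, h, h', ne_eq, not_false_eq_true] at he
  · have hf : g (P.fEnd a) = g (P.fEnd a') := by rw [he]
    exact hne (h.symm.trans (hf.trans h'))
  · exact hfs a a' hne h' he
  · exact hfs a' a (Ne.symm hne) h he.symm
  · exact h (hrep a ⟨a', Ne.symm hne, by simp [SCollides, he]⟩)

lemma isWellFormed_repMatching {g : I → A} (hg : ∀ a, P.fEnd (g (P.fEnd a)) = P.fEnd a)
    (hinj : (P.repMatching g).Injective) : P.IsWellFormed (P.repMatching g) := by
  have hrep : ∀ a, P.repMatching g (g (P.fEnd a)) = P.fEnd a := fun a => by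
    rw [repMatching_of_eq (by rw [hg a]), hg a]
  refine ⟨hinj, fun x hx => ?_, fun y hy => ?_, fun p hp => ?_, fun q hq => ?_⟩
  · by_cases h : g (P.fEnd x) = x
    · exact Or.inl (by rw [repMatching_of_eq h, fEnd_of_mem_A1 hx])
    · exact Or.inr (by rw [repMatching_of_ne h, sEnd_of_mem_A1 hx])
  · have hy1 := P.mem_A2_iff.mp hy
    by_cases h : g (P.fEnd y) = y
    · exact Or.inl (by rw [repMatching_of_eq h, fEnd_of_notMem_A1 hy1])
    · exact Or.inr (by rw [repMatching_of_ne h, sEnd_of_notMem_A1 hy1])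
  · obtain ⟨x, hx, rfl⟩ := Finset.mem_image.mp hp
    have hr : g (P.fEnd x) ∈ P.A1 :=
      P.fEnd_mem_F1_iff.mp (by rw [hg x]; exact P.fEnd_mem_F1_iff.mpr hx)
    refine ⟨_, hr, ?_, ?_⟩
    · rw [← fEnd_of_mem_A1 hr, hg x, fEnd_of_mem_A1 hx]
    · rw [hrep, fEnd_of_mem_A1 hx]
  · obtain ⟨y, hy, rfl⟩ := Finset.mem_image.mp hq
    have hy1 := P.mem_A2_iff.mp hy
    have hr : g (P.fEnd y) ∉ P.A1 := fun h =>
      hy1 (P.fEnd_mem_F1_iff.mp (by rw [← hg y]; exact P.fEnd_mem_F1_iff.mpr h))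
    refine ⟨_, P.mem_A2_iff.mpr hr, ?_, ?_⟩
    · rw [← fEnd_of_notMem_A1 hr, hg y, fEnd_of_notMem_A1 hy1]
    · rw [hrep, fEnd_of_notMem_A1 hy1]

theorem Good.hasWellFormed (hG : P.Good) : P.HasWellFormed := by
  obtain hA | hA := isEmpty_or_nonempty A
  · refine ⟨isEmptyElim, Function.injective_of_subsingleton _, ?_⟩
    simp [F1, F2, Finset.eq_empty_of_isEmpty]
  obtain ⟨g, hg⟩ := exists_fiber_representative P.fEnd P.Delicate
  have hrep : ∀ a, P.Delicate a → g (P.fEnd a) = a := fun a ha => by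
    by_contra hne
    exact hG _ _ hne (hg a).1 ⟨(hg a).2 ha, ha⟩
  exact ⟨_, isWellFormed_repMatching (fun a => (hg a).1)
    (repMatching_injective hrep)⟩

theorem Good.hasPopular (hw : 2 * P.w2 ≤ P.w1) (hG : P.Good) : P.HasPopular :=
  let ⟨M, hM⟩ := hG.hasWellFormed
  ⟨M, hM.isPopular hw⟩

variable (P) in
def fExcl (a : A) : Finset I := if a ∈ P.A1 then ∅ else P.F1

variable (P) in
def sExcl (a : A) : Finset I := if a ∈ P.A1 then P.F1 else P.F1 ∪ P.F2

lemma fEnd_eq_bestIn (a : A) : P.fEnd a = P.bestIn a (univ \ P.fExcl a) := by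
  by_cases h : a ∈ P.A1
  · rw [fEnd_of_mem_A1 h, fExcl, if_pos h, Finset.sdiff_empty]; rfl
  · rw [fEnd_of_notMem_A1 h, fExcl, if_neg h]; rfl

lemma sEnd_eq_bestIn (a : A) : P.sEnd a = P.bestIn a (univ \ P.sExcl a) := by
  by_cases h : a ∈ P.A1
  · rw [sEnd_of_mem_A1 h, sExcl, if_pos h]; rfl
  · rw [sEnd_of_notMem_A1 h, sExcl, if_neg h]; rfl

lemma card_fExcl_le (a : A) : #(P.fExcl a) ≤ Fintype.card A := by
  unfold fExcl
  split_ifs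
  exacts [by simp, P.card_F1_le]

lemma card_sExcl_le (a : A) : #(P.sExcl a) ≤ Fintype.card A := by
  unfold sExcl
  split_ifs
  exacts [P.card_F1_le, P.card_F1_union_F2_le]

lemma F1_subset_sExcl (a : A) : P.F1 ⊆ P.sExcl a := by
  unfold sExcl
  split_ifs
  exacts [subset_rfl, Finset.subset_union_left]

lemma fExcl_subset_sExcl (a : A) : P.fExcl a ⊆ P.sExcl a := by
  unfold fExcl
  split_ifs
  exacts [Finset.empty_subset _, P.F1_subset_sExcl a]

lemma fEnd_mem_sExcl (a : A) : P.fEnd a ∈ P.sExcl a := by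
  by_cases h : a ∈ P.A1
  · rw [sExcl, if_pos h]
    exact P.fEnd_mem_F1_iff.mpr h
  · rw [sExcl, if_neg h, fEnd_of_notMem_A1 h]
    exact Finset.mem_union_right _ (P.f2_mem_F2 (P.mem_A2_iff.mpr h))

variable (P) in
structure IsSwap (P' : TwoWPM A I) (z : A) (u v : I) : Prop where
  A1_eq : P'.A1 = P.A1
  rank_of_ne : ∀ x, x ≠ z → P'.rank x = P.rank x
  rank_self : ∀ p, P'.rank z p = P.rank z (Equiv.swap u v p)

namespace IsSwap

variable {P' : TwoWPM A I} {z : A} {u v : I}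

lemma bestIn_of_ne (hs : IsSwap P P' z u v) {x : A} (hx : x ≠ z) (s : Finset I) :
    P'.bestIn x s = P.bestIn x s :=
  bestIn_congr (hs.rank_of_ne x hx) s

lemma bestIn_self (hs : IsSwap P P' z u v) {s : Finset I} (hu : u ∈ s) (hv : v ∈ s) :
    P'.bestIn z s = Equiv.swap u v (P.bestIn z s) := by
  have hmaps : ∀ p ∈ s, Equiv.swap u v p ∈ s := fun p hp => by
    rcases eq_or_ne p u with rfl | hpu
    · simpa using hv
    rcases eq_or_ne p v with rfl | hpv
    · simpa using hu
    · rwa [Equiv.swap_apply_of_ne_of_ne hpu hpv]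
  refine bestIn_eq_of_forall_le (hmaps _ (bestIn_mem ⟨u, hu⟩)) fun p hp => ?_
  rw [hs.rank_self, hs.rank_self, Equiv.swap_apply_self]
  exact rank_bestIn_le (hmaps p hp)

lemma F1_eq_of_notMem_A1 (hs : IsSwap P P' z u v) (hz : z ∉ P.A1) : P'.F1 = P.F1 := by
  rw [F1, F1, hs.A1_eq]
  exact Finset.image_congr fun x hx => hs.bestIn_of_ne (ne_of_mem_of_not_mem hx hz) _

lemma F1_eq (hs : IsSwap P P' z u v) (hu : u ∉ P.sExcl z) (hv : v ∉ P.sExcl z) :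
    P'.F1 = P.F1 := by
  by_cases hz : z ∈ P.A1
  · rw [F1, F1, hs.A1_eq]
    refine Finset.image_congr fun x hx => ?_
    rcases eq_or_ne x z with rfl | hxz
    · have hf := P.f1_mem_F1 hx
      rw [f1, hs.bestIn_self (Finset.mem_univ u) (Finset.mem_univ v)]
      exact Equiv.swap_apply_of_ne_of_ne (fun h => hu (P.F1_subset_sExcl _ (h ▸ hf)))
        (fun h => hv (P.F1_subset_sExcl _ (h ▸ hf)))
    · exact hs.bestIn_of_ne hxz _
  · exact hs.F1_eq_of_notMem_A1 hz

lemma fExcl_eq (hs : IsSwap P P' z u v) (hF1 : P'.F1 = P.F1) (x : A) :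
    P'.fExcl x = P.fExcl x := by
  rw [fExcl, fExcl, hs.A1_eq, hF1]

lemma fExcl_self (hs : IsSwap P P' z u v) : P'.fExcl z = P.fExcl z := by
  by_cases hz : z ∈ P.A1
  · rw [fExcl, fExcl, hs.A1_eq, if_pos hz, if_pos hz]
  · exact hs.fExcl_eq (hs.F1_eq_of_notMem_A1 hz) z

lemma fEnd_of_ne_of_mem_A1_iff (hs : IsSwap P P' z u v) {x : A} (hxz : x ≠ z)
    (hx : x ∈ P.A1 ↔ z ∈ P.A1) : P'.fEnd x = P.fEnd x := by
  by_cases h : x ∈ P.A1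
  · rw [fEnd_eq_bestIn, fEnd_eq_bestIn, fExcl, fExcl, hs.A1_eq, if_pos h, if_pos h]
    exact hs.bestIn_of_ne hxz _
  · rw [fEnd_eq_bestIn, fEnd_eq_bestIn, hs.fExcl_eq (hs.F1_eq_of_notMem_A1 (hx.not.mp h))]
    exact hs.bestIn_of_ne hxz _

lemma fEnd_eq (hs : IsSwap P P' z u v) (hu : u ∉ P.sExcl z) (hv : v ∉ P.sExcl z) (x : A) :
    P'.fEnd x = P.fEnd x := by
  rw [fEnd_eq_bestIn, fEnd_eq_bestIn, hs.fExcl_eq (hs.F1_eq hu hv)]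
  rcases eq_or_ne x z with rfl | hxz
  · have hf := P.fEnd_mem_sExcl x
    rw [hs.bestIn_self (by simpa using fun h => hu (P.fExcl_subset_sExcl x h))
      (by simpa using fun h => hv (P.fExcl_subset_sExcl x h)), ← fEnd_eq_bestIn]
    exact Equiv.swap_apply_of_ne_of_ne (fun h => hu (h ▸ hf)) (fun h => hv (h ▸ hf))
  · exact hs.bestIn_of_ne hxz _

lemma F2_eq (hs : IsSwap P P' z u v) (hu : u ∉ P.sExcl z) (hv : v ∉ P.sExcl z) :
    P'.F2 = P.F2 := by
  have hA2 : P'.A2 = P.A2 := by ext x; rw [mem_A2_iff, mem_A2_iff, hs.A1_eq]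
  rw [F2, F2, hA2]
  refine Finset.image_congr fun x hx => ?_
  have hx1 := P.mem_A2_iff.mp hx
  rw [← fEnd_of_notMem_A1 hx1, ← fEnd_of_notMem_A1 (hs.A1_eq ▸ hx1), hs.fEnd_eq hu hv]

lemma sExcl_eq (hs : IsSwap P P' z u v) (hu : u ∉ P.sExcl z) (hv : v ∉ P.sExcl z) (x : A) :
    P'.sExcl x = P.sExcl x := by
  rw [sExcl, sExcl, hs.A1_eq, hs.F1_eq hu hv, hs.F2_eq hu hv]

lemma sEnd_of_ne (hs : IsSwap P P' z u v) (hu : u ∉ P.sExcl z) (hv : v ∉ P.sExcl z) {x : A}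
    (hxz : x ≠ z) : P'.sEnd x = P.sEnd x := by
  rw [sEnd_eq_bestIn, sEnd_eq_bestIn, hs.sExcl_eq hu hv]
  exact hs.bestIn_of_ne hxz _

lemma s1_of_ne (hs : IsSwap P P' z u v) (hu : u ∉ P.sExcl z) (hv : v ∉ P.sExcl z) {x : A}
    (hxz : x ≠ z) : P'.s1 x = P.s1 x := by
  rw [s1, s1, hs.F1_eq hu hv]
  exact hs.bestIn_of_ne hxz _

lemma sCollides_iff (hs : IsSwap P P' z u v) (hu : u ∉ P.sExcl z) (hv : v ∉ P.sExcl z) {a b : A}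
    (haz : a ≠ z) (hbz : b ≠ z) : P'.SCollides a b ↔ P.SCollides a b := by
  rw [SCollides, SCollides, hs.sEnd_of_ne hu hv haz, hs.sEnd_of_ne hu hv hbz, hs.s1_of_ne hu hv hbz]

end IsSwap

section RandomProfile

variable {ι α : Type} [Fintype ι] [DecidableEq ι] [Fintype α] [DecidableEq α]
  {Q : (ι → α ≃ α) → TwoWPM ι α}

variable (Q) in
def IsSwapFamily : Prop := ∀ σ z u v, (Q σ).IsSwap (Q (swapAt σ z u v)) z u v

/-- Exchanging two items outside `t σ` in the list of `z` moves `bestIn z (univ \ t σ)` to any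
of the at least `card α - card ι` items outside `t σ`. -/
lemma card_bestIn_mem_mul_le (hQ : IsSwapFamily Q)
    (z : ι) (t T : (ι → α ≃ α) → Finset α) (E : (ι → α ≃ α) → Prop) [DecidablePred E] {c : ℕ}
    (ht : ∀ σ, #(t σ) ≤ Fintype.card ι) (hc : ∀ σ, #(T σ) ≤ c)
    (hinv : ∀ σ, (Q σ).bestIn z (univ \ t σ) ∈ T σ → E σ → ∀ u v, u ∉ t σ → v ∉ t σ →
      t (swapAt σ z u v) = t σ ∧ T (swapAt σ z u v) = T σ ∧ E (swapAt σ z u v)) :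
    #{σ | (Q σ).bestIn z (univ \ t σ) ∈ T σ ∧ E σ} * (Fintype.card α - Fintype.card ι) ≤
      #{σ | E σ} * c := by
  refine card_mul_le_card_mul_of_swapAt z t T (fun σ => (Q σ).bestIn z (univ \ t σ))
    (fun σ _ => ?_) hc (fun σ hσ => (Finset.mem_filter.mp hσ).2.1) fun σ hσ v hv => ?_
  · rw [Finset.card_univ_sdiff]
    exact Nat.sub_le_sub_left (ht σ) _
  obtain ⟨hT, hE⟩ := (Finset.mem_filter.mp hσ).2
  have hu : (Q σ).bestIn z (univ \ t σ) ∉ t σ := bestIn_notMem_of_card_le (ht σ)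
  obtain ⟨ht', hT', hE'⟩ := hinv σ hT hE _ v hu hv
  refine ⟨Finset.mem_filter.mpr ⟨Finset.mem_univ _, hE'⟩, ht', hT', ?_⟩
  rw [ht', (hQ σ z _ v).bestIn_self (by simpa using hu) (by simpa using hv)]
  exact Equiv.swap_apply_left _ _

lemma card_fEnd_eq_mul_le (hQ : IsSwapFamily Q)
    {a a' : ι} (h : a ≠ a') :
    #{σ | (Q σ).fEnd a = (Q σ).fEnd a'} * (Fintype.card α - Fintype.card ι) ≤
      Fintype.card (ι → α ≃ α) := by
  have key := card_bestIn_mem_mul_le hQ a (fun σ => (Q σ).fExcl a) (fun σ => {(Q σ).fEnd a'})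
    (fun _ => True) (fun σ => (Q σ).card_fExcl_le a) (fun _ => (Finset.card_singleton _).le)
    fun σ hσ _ u v _ _ => ?_
  · simpa [← fEnd_eq_bestIn] using key
  have hσ : (Q σ).fEnd a = (Q σ).fEnd a' := by simpa [← fEnd_eq_bestIn] using hσ
  have hcat : a' ∈ (Q σ).A1 ↔ a ∈ (Q σ).A1 := by
    rw [← fEnd_mem_F1_iff, ← fEnd_mem_F1_iff, hσ]
  exact ⟨(hQ σ a u v).fExcl_self, by rw [(hQ σ a u v).fEnd_of_ne_of_mem_A1_iff h.symm hcat],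
    trivial⟩

lemma card_sCollides_and_mul_le (hQ : IsSwapFamily Q)
    {z b : ι} (hb : b ≠ z) (E : (ι → α ≃ α) → Prop) [DecidablePred E]
    (hE : ∀ σ u v, u ∉ (Q σ).sExcl z → v ∉ (Q σ).sExcl z → E σ → E (swapAt σ z u v)) :
    #{σ | (Q σ).SCollides z b ∧ E σ} * (Fintype.card α - Fintype.card ι) ≤ #{σ | E σ} * 2 := by
  have key := card_bestIn_mem_mul_le hQ z (fun σ => (Q σ).sExcl z)
    (fun σ => {(Q σ).sEnd b, (Q σ).s1 b}) E (fun σ => (Q σ).card_sExcl_le z)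
    (fun _ => Finset.card_le_two) fun σ _ hEσ u v hu hv => ?_
  · convert key using 4 with σ
    rw [SCollides, sEnd_eq_bestIn z]
  have hs := hQ σ z u v
  exact ⟨hs.sExcl_eq hu hv z, by rw [hs.sEnd_of_ne hu hv hb, hs.s1_of_ne hu hv hb],
    hE σ u v hu hv hEσ⟩

lemma card_sCollides_fEnd_eq_mul_le (hQ : IsSwapFamily Q)
    {a a' b : ι} (ha : a ≠ a') (hb : b ≠ a) :
    #{σ | (Q σ).SCollides a b ∧ (Q σ).fEnd a = (Q σ).fEnd a'} *
      (Fintype.card α - Fintype.card ι) ^ 2 ≤ Fintype.card (ι → α ≃ α) * 2 := by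
  have h1 := card_sCollides_and_mul_le hQ hb (fun σ => (Q σ).fEnd a = (Q σ).fEnd a')
    fun σ u v hu hv h => by
      simp only [(hQ σ a u v).fEnd_eq hu hv, h]
  have h2 := card_fEnd_eq_mul_le hQ ha
  nlinarith [Nat.mul_le_mul_right (Fintype.card α - Fintype.card ι) h1]

lemma card_sCollides_sCollides_fEnd_eq_mul_le_of_ne
    (hQ : IsSwapFamily Q) {a a' b b' : ι} (ha : a ≠ a')
    (hb : b ≠ a) (hb' : b' ≠ a') (hba' : b ≠ a') :
    #{σ | (Q σ).SCollides a' b' ∧ (Q σ).SCollides a b ∧ (Q σ).fEnd a = (Q σ).fEnd a'} *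
      (Fintype.card α - Fintype.card ι) ^ 3 ≤ Fintype.card (ι → α ≃ α) * 4 := by
  have h1 := card_sCollides_and_mul_le hQ hb'
    (fun σ => (Q σ).SCollides a b ∧ (Q σ).fEnd a = (Q σ).fEnd a') fun σ u v hu hv h => by
      simp only [(hQ σ a' u v).sCollides_iff hu hv ha hba', (hQ σ a' u v).fEnd_eq hu hv, h,
        and_self]
  have h2 := card_sCollides_fEnd_eq_mul_le hQ ha hb
  nlinarith [Nat.mul_le_mul_right ((Fintype.card α - Fintype.card ι) ^ 2) h1]

lemma card_sCollides_sCollides_fEnd_eq_mul_le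
    (hQ : IsSwapFamily Q) {a a' b b' : ι} (ha : a ≠ a')
    (hb : b ≠ a) (hb' : b' ≠ a') (hbb' : b ≠ a' ∨ b' ≠ a) :
    #{σ | (Q σ).SCollides a' b' ∧ (Q σ).SCollides a b ∧ (Q σ).fEnd a = (Q σ).fEnd a'} *
      (Fintype.card α - Fintype.card ι) ^ 3 ≤ Fintype.card (ι → α ≃ α) * 4 := by
  rcases hbb' with hba' | hb'a
  · exact card_sCollides_sCollides_fEnd_eq_mul_le_of_ne hQ ha hb hb' hba'
  · convert card_sCollides_sCollides_fEnd_eq_mul_le_of_ne hQ ha.symm hb' hb hb'a using 3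
    ext σ
    simp only [Finset.mem_filter, Finset.mem_univ, true_and, eq_comm (a := (Q σ).fEnd a)]
    tauto

/-- Union bound over the witnesses `a ≠ a'`, `b ≠ a`, `b' ≠ a'` of non-goodness: the pairs with
`b = a'`, `b' = a` cost two switchings each, all other quadruples three. -/
theorem card_not_good_mul_le (hQ : IsSwapFamily Q) :
    #{σ | ¬ (Q σ).Good} * (Fintype.card α - Fintype.card ι) ^ 3 ≤
      (2 * Fintype.card ι ^ 2 * (Fintype.card α - Fintype.card ι) + 4 * Fintype.card ι ^ 4) *
        Fintype.card (ι → α ≃ α) := by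
  set r := Fintype.card α - Fintype.card ι
  set N := Fintype.card (ι → α ≃ α)
  let pair : ι × ι → Finset (ι → α ≃ α) := fun p =>
    {σ | (Q σ).SCollides p.1 p.2 ∧ (Q σ).fEnd p.1 = (Q σ).fEnd p.2}
  let quad : (ι × ι) × (ι × ι) → Finset (ι → α ≃ α) := fun q =>
    {σ | (Q σ).SCollides q.1.2 q.2.2 ∧ (Q σ).SCollides q.1.1 q.2.1 ∧
      (Q σ).fEnd q.1.1 = (Q σ).fEnd q.1.2}
  let S2 : Finset (ι × ι) := {p | p.1 ≠ p.2}
  let S4 : Finset ((ι × ι) × (ι × ι)) :=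
    {q | q.1.1 ≠ q.1.2 ∧ q.2.1 ≠ q.1.1 ∧ q.2.2 ≠ q.1.2 ∧ (q.2.1 ≠ q.1.2 ∨ q.2.2 ≠ q.1.1)}
  have hsub : ({σ | ¬ (Q σ).Good} : Finset _) ⊆ S2.biUnion pair ∪ S4.biUnion quad := by
    intro σ hσ
    simp only [Good, Delicate, Finset.mem_filter, Finset.mem_univ, true_and, not_forall,
      not_not] at hσ
    obtain ⟨a, a', ha, hf, ⟨b, hb, hab⟩, ⟨b', hb', hab'⟩⟩ := hσ
    simp only [Finset.mem_union, Finset.mem_biUnion, Finset.mem_filter, Finset.mem_univ,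
      true_and, pair, quad, S2, S4, Prod.exists]
    by_cases hdeg : b = a' ∧ b' = a
    · exact Or.inl ⟨a, a', ha, hdeg.1 ▸ hab, hf⟩
    · exact Or.inr ⟨a, a', b, b', ⟨ha, hb, hb', by tauto⟩, hab', hab, hf⟩
  have hpair : ∀ p ∈ S2, #(pair p) * r ^ 3 ≤ N * 2 * r := fun p hp => by
    have hp : p.1 ≠ p.2 := (Finset.mem_filter.mp hp).2
    calc #(pair p) * r ^ 3 = #(pair p) * r ^ 2 * r := by ring
      _ ≤ N * 2 * r := Nat.mul_le_mul_right _ (card_sCollides_fEnd_eq_mul_le hQ hp hp.symm)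
  have hquad : ∀ q ∈ S4, #(quad q) * r ^ 3 ≤ N * 4 := fun q hq => by
    obtain ⟨h1, h2, h3, h4⟩ := (Finset.mem_filter.mp hq).2
    exact card_sCollides_sCollides_fEnd_eq_mul_le hQ h1 h2 h3 h4
  calc #{σ | ¬ (Q σ).Good} * r ^ 3
      ≤ #(S2.biUnion pair) * r ^ 3 + #(S4.biUnion quad) * r ^ 3 := by
        rw [← add_mul]
        exact Nat.mul_le_mul_right _ ((Finset.card_le_card hsub).trans (Finset.card_union_le _ _))
    _ ≤ #S2 * (N * 2 * r) + #S4 * (N * 4) :=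
        add_le_add (card_biUnion_mul_le_card_mul hpair) (card_biUnion_mul_le_card_mul hquad)
    _ ≤ Fintype.card ι ^ 2 * (N * 2 * r) + Fintype.card ι ^ 4 * (N * 4) := by
        gcongr <;> exact (Finset.card_le_univ _).trans_eq (by simp only [Fintype.card_prod]; ring)
    _ = _ := by ring

theorem card_not_good_le (hQ : IsSwapFamily Q)
    (hια : Fintype.card ι < Fintype.card α) :
    (#{σ | ¬ (Q σ).Good} : ℝ) ≤
      (2 * Fintype.card ι ^ 2 / ((Fintype.card α : ℝ) - Fintype.card ι) ^ 2 +
        4 * Fintype.card ι ^ 4 / ((Fintype.card α : ℝ) - Fintype.card ι) ^ 3) *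
        Fintype.card (ι → α ≃ α) := by
  have hr : (0 : ℝ) < Fintype.card α - Fintype.card ι := sub_pos.mpr (by exact_mod_cast hια)
  have hbad : (#{σ | ¬ (Q σ).Good} : ℝ) * ((Fintype.card α : ℝ) - Fintype.card ι) ^ 3 ≤
      (2 * Fintype.card ι ^ 2 * ((Fintype.card α : ℝ) - Fintype.card ι) +
        4 * Fintype.card ι ^ 4) * Fintype.card (ι → α ≃ α) := by
    rw [← Nat.cast_sub hια.le]
    exact_mod_cast card_not_good_mul_le hQ
  rw [div_add_div _ _ (pow_ne_zero 2 hr.ne') (pow_ne_zero 3 hr.ne'), div_mul_eq_mul_div,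
    le_div_iff₀ (by positivity)]
  nlinarith [pow_pos hr 2]

end RandomProfile

end TwoWPM

lemma isSwapFamily_instOf {n k m : ℕ} {w1 w2 : ℝ} (h : n < m ∧ w2 < w1 ∧ 0 < w2) :
    TwoWPM.IsSwapFamily (instOf n k m w1 w2 h) := fun σ z u v =>
  { A1_eq := rfl
    rank_of_ne := fun x hx => by simp [instOf, swapAt, Function.update_of_ne hx]
    rank_self := fun p => by simp [instOf, swapAt] }

theorem one_sub_le_pmProb {n k m : ℕ} {w1 w2 : ℝ} (hnm : n < m) (hw2 : 0 < w2)
    (hw : 2 * w2 ≤ w1) :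
    1 - (2 * n ^ 2 / ((m : ℝ) - n) ^ 2 + 4 * n ^ 4 / ((m : ℝ) - n) ^ 3) ≤ pmProb n k m w1 w2 := by
  have h : n < m ∧ w2 < w1 ∧ 0 < w2 := ⟨hnm, by linarith, hw2⟩
  have hbad := TwoWPM.card_not_good_le (isSwapFamily_instOf (k := k) h) (by simpa using hnm)
  simp only [Fintype.card_fin] at hbad
  have hcount : Fintype.card (Fin n → (Fin m ≃ Fin m)) ≤
      #{σ | (instOf n k m w1 w2 h σ).HasPopular} + #{σ | ¬ (instOf n k m w1 w2 h σ).Good} := by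
    rw [← Finset.card_univ, ← Finset.card_filter_add_card_filter_not (p := fun σ =>
      (instOf n k m w1 w2 h σ).Good)]
    exact Nat.add_le_add_right (Finset.card_le_card fun σ hσ => Finset.mem_filter.mpr
      ⟨Finset.mem_univ σ, (Finset.mem_filter.mp hσ).2.hasPopular hw⟩) _
  have hcount' : (Fintype.card (Fin n → (Fin m ≃ Fin m)) : ℝ) ≤
      #{σ | (instOf n k m w1 w2 h σ).HasPopular} + #{σ | ¬ (instOf n k m w1 w2 h σ).Good} := by
    exact_mod_cast hcount
  rw [pmProb, dif_pos h, le_div_iff₀ (by positivity)]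
  linarith

lemma rpow_four_thirds_pow_three {x : ℝ} (hx : 0 ≤ x) : (x ^ ((4 : ℝ) / 3)) ^ 3 = x ^ 4 := by
  rw [← Real.rpow_natCast, ← Real.rpow_mul hx]
  norm_num

lemma collision_bound_le {n M : ℝ} (hn : 1 ≤ n) (hM : n ^ ((4 : ℝ) / 3) < M) :
    2 * n ^ 2 / (M - n) ^ 2 + 4 * n ^ 4 / (M - n) ^ 3 ≤
      2 * (n ^ ((4 : ℝ) / 3) / (M - n ^ ((4 : ℝ) / 3))) ^ 2 +
        4 * (n ^ ((4 : ℝ) / 3) / (M - n ^ ((4 : ℝ) / 3))) ^ 3 := by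
  have hp : n ≤ n ^ ((4 : ℝ) / 3) := Real.self_le_rpow_of_one_le hn (by norm_num)
  have he : 0 < M - n ^ ((4 : ℝ) / 3) := sub_pos.mpr hM
  have hd : n / (M - n) ≤ n ^ ((4 : ℝ) / 3) / (M - n ^ ((4 : ℝ) / 3)) := by gcongr
  have hd' : n ^ ((4 : ℝ) / 3) / (M - n) ≤ n ^ ((4 : ℝ) / 3) / (M - n ^ ((4 : ℝ) / 3)) := by
    gcongr
  rw [← rpow_four_thirds_pow_three (by linarith), mul_div_assoc, mul_div_assoc, ← div_pow,
    ← div_pow]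
  gcongr
  · exact div_nonneg (by linarith) (by linarith)
  · exact div_nonneg (by positivity) (by linarith)

lemma tendsto_collision_bound {m : ℕ → ℕ} (hm : ∀ n, n < m n)
    (hlim : Tendsto (fun n : ℕ => (n : ℝ) ^ ((4 : ℝ) / 3) / (m n : ℝ)) atTop (𝓝 0)) :
    Tendsto (fun n : ℕ => 2 * (n : ℝ) ^ 2 / ((m n : ℝ) - n) ^ 2 +
      4 * (n : ℝ) ^ 4 / ((m n : ℝ) - n) ^ 3) atTop (𝓝 0) := by
  set x := fun n : ℕ => (n : ℝ) ^ ((4 : ℝ) / 3) / (m n : ℝ)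
  have hy : Tendsto (fun n => 2 * (x n / (1 - x n)) ^ 2 + 4 * (x n / (1 - x n)) ^ 3) atTop
      (𝓝 0) := by
    have h := hlim.div (tendsto_const_nhds.sub hlim) (by norm_num : (1 : ℝ) - 0 ≠ 0)
    simpa using ((h.pow 2).const_mul 2).add ((h.pow 3).const_mul 4)
  refine squeeze_zero' (Eventually.of_forall fun n => ?_) ?_ hy
  · have : (0 : ℝ) < m n - n := sub_pos.mpr (by exact_mod_cast hm n)
    positivity
  filter_upwards [eventually_ge_atTop 1, hlim.eventually (gt_mem_nhds one_pos)] with n hn hx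
  have hm0 : (0 : ℝ) < m n := by exact_mod_cast (Nat.zero_le n).trans_lt (hm n)
  have hxM : (n : ℝ) ^ ((4 : ℝ) / 3) < m n := by
    simpa [x, div_lt_one hm0] using hx
  have e : x n / (1 - x n) = (n : ℝ) ^ ((4 : ℝ) / 3) / (m n - (n : ℝ) ^ ((4 : ℝ) / 3)) := by
    simp only [x]
    field_simp
  rw [e]
  exact collision_bound_le (by exact_mod_cast hn) hxM

theorem random_two_weighted_popular_upper_bound_general
    (δ : ℝ)
    (w1 w2 : ℝ) (hw2 : 0 < w2) (hw12 : 2 * w2 ≤ w1)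
    (m : ℕ → ℕ) (hm : ∀ n : ℕ, n < m n)
    (hlim : Filter.Tendsto (fun n : ℕ => (n : ℝ) ^ ((4 : ℝ) / 3) / (m n : ℝ))
      Filter.atTop (nhds 0)) :
    ∀ ε : ℝ, 0 < ε → ∃ N : ℕ, ∀ n : ℕ, N ≤ n → ∀ k : ℕ, (k : ℝ) = δ * n →
      1 - ε ≤ pmProb n k (m n) w1 w2 := by
  intro ε hε
  obtain ⟨N, hN⟩ := eventually_atTop.mp
    ((tendsto_collision_bound hm hlim).eventually (gt_mem_nhds hε))
  refine ⟨N, fun n hn k _ => ?_⟩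
  linarith [hN n hn, one_sub_le_pmProb (k := k) (hm n) hw2 hw12]

/-- **Theorem 5, upper bound.** Fix `δ ∈ (0,1)` and weights
`w1 ≥ 2 w2 > 0`. If `m(n) > n` and `n^{4/3}/m(n) → 0`, then the probability that a
random instance of the complete and strict 2-weighted popular matching problem with
`n` applicants (`|A1| = δn`, `|A2| = (1-δ)n`) and `m(n)` items has a 2-weighted
popular matching tends to `1` (along those `n` with `δn ∈ ℕ`). -/
theorem random_two_weighted_popular_upper_bound
    (δ : ℝ) (hδ0 : 0 < δ) (hδ1 : δ < 1)
    (w1 w2 : ℝ) (hw2 : 0 < w2) (hw12 : 2 * w2 ≤ w1)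
    (m : ℕ → ℕ) (hm : ∀ n : ℕ, n < m n)
    (hlim : Filter.Tendsto (fun n : ℕ => (n : ℝ) ^ ((4 : ℝ) / 3) / (m n : ℝ))
      Filter.atTop (nhds 0)) :
    ∀ ε : ℝ, 0 < ε → ∃ N : ℕ, ∀ n : ℕ, N ≤ n → ∀ k : ℕ, (k : ℝ) = δ * n →
      1 - ε ≤ pmProb n k (m n) w1 w2 :=
  random_two_weighted_popular_upper_bound_general δ w1 w2 hw2 hw12 m hm hlim
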